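/- Let f : ℝⁿ → ℝ be a C² function with min f = 0 satisfying ‖∇f(x)‖² ≥ f(x) for all x ∈ ℝⁿ, let K = argmin(f), let x ∈ K, and let π be the orthogonal projection of ℝⁿ onto the kernel of the Hessian H(x) = ∇²f(x). Then there exists r > 0 such that the restriction of π to K ∩ B(x, r) is injective, where B(x, r) is the open Euclidean ball of radius r centered at x. -/

import Mathlib

/-!
At a point of `argmin f` the gradient vanishes, so any two points `y, z` of `argmin f` satisfy
`∇f y - ∇f z = 0`. Since `∇f` is strictly differentiable at `x` with derivative `H = ∇²f(x)`,
near `x` this forces `‖H (y - z)‖ ≤ ε ‖y - z‖` for arbitrarily small `ε`. If `y` and `z` have the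
same projection onto `Ker H`, then `y - z ∈ (Ker H)ᗮ`, where `H` is bounded below; hence `y = z`.
-/

open Metric
open scoped NNReal

section Coercive

variable {𝕜 E F : Type*} [NontriviallyNormedField 𝕜]
  [NormedAddCommGroup E] [NormedSpace 𝕜 E] [NormedAddCommGroup F] [NormedSpace 𝕜 F]

theorem ContinuousLinearMap.exists_norm_le_mul_norm_of_disjoint_ker [CompleteSpace 𝕜]
    (H : E →L[𝕜] F) (V : Submodule 𝕜 E) [FiniteDimensional 𝕜 V]
    (hV : Disjoint V (LinearMap.ker (H : E →ₗ[𝕜] F))) :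
    ∃ C : ℝ≥0, 0 < C ∧ ∀ v ∈ V, ‖v‖ ≤ C * ‖H v‖ := by
  have hker : LinearMap.ker ((H : E →ₗ[𝕜] F).comp V.subtype) = ⊥ := by
    rw [LinearMap.ker_comp, ← Submodule.disjoint_iff_comap_eq_bot]
    exact hV
  obtain ⟨C, hC, hanti⟩ := ((H : E →ₗ[𝕜] F).comp V.subtype).exists_antilipschitzWith hker
  refine ⟨C, hC, fun v hv => ?_⟩
  simpa using hanti.le_mul_dist ⟨v, hv⟩ 0

theorem ApproximatesLinearOn.eq_of_sub_mem {g : E → F} {H : E →L[𝕜] F} {s : Set E} {c C : ℝ≥0}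
    (hg : ApproximatesLinearOn g H s c) {V : Submodule 𝕜 E} (hV : ∀ v ∈ V, ‖v‖ ≤ C * ‖H v‖)
    (hCc : C * c < 1) {y z : E} (hy : y ∈ s) (hz : z ∈ s) (hgyz : g y = g z) (hyz : y - z ∈ V) :
    y = z := by
  have hH : ‖H (y - z)‖ ≤ c * ‖y - z‖ := by
    simpa [hgyz, norm_sub_rev] using hg y hy z hz
  have hle : ‖y - z‖ ≤ (C * c : ℝ≥0) * ‖y - z‖ :=
    calc ‖y - z‖ ≤ C * ‖H (y - z)‖ := hV _ hyz
      _ ≤ C * (c * ‖y - z‖) := by gcongr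
      _ = (C * c : ℝ≥0) * ‖y - z‖ := by push_cast; ring
  have hCc' : ((C * c : ℝ≥0) : ℝ) < 1 := by exact_mod_cast hCc
  have hnorm : ‖y - z‖ = 0 := by nlinarith [norm_nonneg (y - z)]
  exact sub_eq_zero.mp (norm_eq_zero.mp hnorm)

theorem HasStrictFDerivAt.exists_eq_of_eq_of_sub_mem [CompleteSpace 𝕜] {g : E → F}
    {H : E →L[𝕜] F} {x : E} (hg : HasStrictFDerivAt g H x) (V : Submodule 𝕜 E)
    [FiniteDimensional 𝕜 V] (hV : Disjoint V (LinearMap.ker (H : E →ₗ[𝕜] F))) :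
    ∃ r > 0, ∀ y ∈ ball x r, ∀ z ∈ ball x r, g y = g z → y - z ∈ V → y = z := by
  obtain ⟨C, hC, hVC⟩ := H.exists_norm_le_mul_norm_of_disjoint_ker V hV
  obtain ⟨s, hs, happrox⟩ := hg.approximates_deriv_on_nhds (c := (2 * C)⁻¹) (Or.inr (by positivity))
  obtain ⟨r, hr, hball⟩ := Metric.mem_nhds_iff.mp hs
  have hCc : C * (2 * C)⁻¹ < 1 := by
    rw [mul_inv, ← mul_assoc, mul_comm C, mul_assoc, mul_inv_cancel₀ hC.ne', mul_one]
    exact inv_lt_one_of_one_lt₀ one_lt_two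
  exact ⟨r, hr, fun y hy z hz hgyz hyz =>
    happrox.eq_of_sub_mem hVC hCc (hball hy) (hball hz) hgyz hyz⟩

end Coercive

section Gradient

variable {F : Type*} [NormedAddCommGroup F] [InnerProductSpace ℝ F] [CompleteSpace F]
  {f : F → ℝ}

theorem IsLocalMin.gradient_eq_zero {y : F} (hf : IsLocalMin f y) : gradient f y = 0 := by
  simp [gradient, hf.fderiv_eq_zero]

theorem ContDiff.gradient {n : WithTop ℕ∞} (hf : ContDiff ℝ (n + 1) f) :
    ContDiff ℝ n (gradient f) :=
  (InnerProductSpace.toDual ℝ F).symm.contDiff.comp (hf.fderiv_right le_rfl)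

end Gradient

theorem pl_projection_injective_on_argmin_general (n : ℕ) (f : EuclideanSpace ℝ (Fin n) → ℝ)
    (hf : ContDiff ℝ 2 f) (hpos : ∀ x, 0 ≤ f x)
    (x : EuclideanSpace ℝ (Fin n)) :
    ∃ r > (0 : ℝ),
      Set.InjOn
        (fun y => (Submodule.orthogonalProjection
          (LinearMap.ker (fderiv ℝ (gradient f) x :
            EuclideanSpace ℝ (Fin n) →ₗ[ℝ] EuclideanSpace ℝ (Fin n))) y :
          EuclideanSpace ℝ (Fin n)))
        ({y | f y = 0} ∩ Metric.ball x r) := by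
  set K := LinearMap.ker (fderiv ℝ (gradient f) x :
    EuclideanSpace ℝ (Fin n) →ₗ[ℝ] EuclideanSpace ℝ (Fin n))
  have hstrict : HasStrictFDerivAt (gradient f) (fderiv ℝ (gradient f) x) x :=
    ((hf.gradient (n := 1)).contDiffAt).hasStrictFDerivAt one_ne_zero
  have hcrit : ∀ y, f y = 0 → gradient f y = 0 := fun y hy =>
    IsLocalMin.gradient_eq_zero (Filter.Eventually.of_forall fun w => hy ▸ hpos w)
  obtain ⟨r, hr, hinj⟩ := hstrict.exists_eq_of_eq_of_sub_mem Kᗮ K.orthogonal_disjoint.symm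
  refine ⟨r, hr, fun y hy z hz hyz => hinj y hy.2 z hz.2 ?_ ?_⟩
  · rw [hcrit y hy.1, hcrit z hz.1]
  · rw [← Submodule.orthogonalProjectionOnto_eq_zero_iff, map_sub, sub_eq_zero]
    exact Subtype.ext hyz

/-- Near a minimizer `x` of a `C²` function with `min f = 0`
satisfying `‖∇f‖² ≥ f`, the orthogonal projection onto `Ker(∇²f(x))` is injective on
`argmin(f) ∩ B(x, r)` for some `r > 0`. -/
theorem pl_projection_injective_on_argmin (n : ℕ) (f : EuclideanSpace ℝ (Fin n) → ℝ)
    (hf : ContDiff ℝ 2 f) (hpos : ∀ x, 0 ≤ f x) (hmin : ∃ x, f x = 0)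
    (hPL : ∀ x, ‖gradient f x‖ ^ 2 ≥ f x)
    (x : EuclideanSpace ℝ (Fin n)) (hx : f x = 0) :
    ∃ r > (0 : ℝ),
      Set.InjOn
        (fun y => (Submodule.orthogonalProjection
          (LinearMap.ker (fderiv ℝ (gradient f) x :
            EuclideanSpace ℝ (Fin n) →ₗ[ℝ] EuclideanSpace ℝ (Fin n))) y :
          EuclideanSpace ℝ (Fin n)))
        ({y | f y = 0} ∩ Metric.ball x r) :=
  pl_projection_injective_on_argmin_general n f hf hpos x
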